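/- Define u(x) = 2·ln( Γ((x+1)/2) / (√x · Γ(x/2)) ) for x > 0. Then u is strictly increasing on (0,∞), satisfies u(x) + u(x+1) = ln(x / (4(x+1))), and u(x) → −ln 2 as x → ∞. -/

import Mathlib

/-- `u(x) = 2·ln( Γ((x+1)/2) / (√x · Γ(x/2)) )`. -/
noncomputable def uFun (x : ℝ) : ℝ :=
  2 * Real.log (Real.Gamma ((x + 1) / 2) / (Real.sqrt x * Real.Gamma (x / 2)))

open Real Filter Finset Topology

noncomputable def auxGn (n : ℕ) (x : ℝ) : ℝ :=
  Real.log n - Real.log x +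
    2 * ∑ i ∈ Finset.range (n + 1), (Real.log (x + 2 * i) - Real.log (x + 1 + 2 * i))

lemma gammaSeq_pos {s : ℝ} (hs : 0 < s) {n : ℕ} (hn : 1 ≤ n) : 0 < Real.GammaSeq s n := by
  have hn' : (0:ℝ) < n := by exact_mod_cast hn
  rw [Real.GammaSeq]
  have h1 : 0 < (n:ℝ) ^ s := Real.rpow_pos_of_pos hn' s
  have h2 : 0 < (n.factorial : ℝ) := by exact_mod_cast n.factorial_pos
  have h3 : 0 < ∏ j ∈ Finset.range (n+1), (s + j) :=
    Finset.prod_pos fun j _ => by positivity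
  positivity

lemma log_gammaSeq {s : ℝ} (hs : 0 < s) {n : ℕ} (hn : 1 ≤ n) :
    Real.log (Real.GammaSeq s n) =
      s * Real.log n + Real.log (n.factorial : ℝ) - ∑ j ∈ Finset.range (n + 1), Real.log (s + j) := by
  have hn' : (0:ℝ) < n := by exact_mod_cast hn
  have h2 : (0:ℝ) < (n.factorial : ℝ) := by exact_mod_cast n.factorial_pos
  have h3 : (0:ℝ) < ∏ j ∈ Finset.range (n+1), (s + j) :=
    Finset.prod_pos fun j _ => by positivity
  have h1 : (0:ℝ) < (n:ℝ) ^ s := Real.rpow_pos_of_pos hn' s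
  rw [Real.GammaSeq, Real.log_div (by positivity) h3.ne', Real.log_mul h1.ne' h2.ne',
    Real.log_rpow hn', Real.log_prod (fun j _ => by positivity)]

lemma auxGn_tendsto {x : ℝ} (hx : 0 < x) :
    Tendsto (fun n => auxGn n x) atTop (𝓝 (uFun x)) := by
  have hx2 : 0 < x / 2 := by linarith
  have hx12 : 0 < (x + 1) / 2 := by linarith
  have hg2 : 0 < Real.Gamma (x / 2) := Real.Gamma_pos_of_pos hx2
  have hg1 : 0 < Real.Gamma ((x + 1) / 2) := Real.Gamma_pos_of_pos hx12
  have hsx : 0 < Real.sqrt x := Real.sqrt_pos.mpr hx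
  have hr : Tendsto
      (fun n => Real.GammaSeq ((x+1)/2) n / Real.GammaSeq (x/2) n / Real.sqrt x)
      atTop (𝓝 (Real.Gamma ((x+1)/2) / Real.Gamma (x/2) / Real.sqrt x)) :=
    ((Real.GammaSeq_tendsto_Gamma _).div (Real.GammaSeq_tendsto_Gamma _) hg2.ne').div_const _
  have hQ : 0 < Real.Gamma ((x+1)/2) / Real.Gamma (x/2) / Real.sqrt x := by positivity
  have hlog : Tendsto
      (fun n => 2 * Real.log (Real.GammaSeq ((x+1)/2) n / Real.GammaSeq (x/2) n / Real.sqrt x))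
      atTop (𝓝 (2 * Real.log (Real.Gamma ((x+1)/2) / Real.Gamma (x/2) / Real.sqrt x))) :=
    ((Real.continuousAt_log hQ.ne').tendsto.comp hr).const_mul 2
  have huQ : uFun x = 2 * Real.log (Real.Gamma ((x+1)/2) / Real.Gamma (x/2) / Real.sqrt x) := by
    rw [uFun, div_div, mul_comm (Real.sqrt x)]
  rw [huQ]
  refine Tendsto.congr' ?_ hlog
  filter_upwards [eventually_ge_atTop 1] with n hn
  have hGS1 : 0 < Real.GammaSeq ((x+1)/2) n := gammaSeq_pos hx12 hn
  have hGS2 : 0 < Real.GammaSeq (x/2) n := gammaSeq_pos hx2 hn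
  have hsum : ∑ j ∈ Finset.range (n+1), (Real.log (x/2 + j) - Real.log ((x+1)/2 + j))
      = ∑ j ∈ Finset.range (n+1), (Real.log (x + 2*j) - Real.log (x + 1 + 2*j)) := by
    refine Finset.sum_congr rfl fun j _ => ?_
    have hj : (0:ℝ) ≤ (j:ℝ) := j.cast_nonneg
    have h1 : x/2 + j = (x + 2*j)/2 := by ring
    have h2 : (x+1)/2 + j = (x + 1 + 2*j)/2 := by ring
    rw [h1, h2, Real.log_div (by linarith) two_ne_zero, Real.log_div (by linarith) two_ne_zero]
    ring
  rw [Real.log_div (by positivity) hsx.ne', Real.log_div hGS1.ne' hGS2.ne',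
    Real.log_sqrt hx.le, log_gammaSeq hx12 hn, log_gammaSeq hx2 hn]
  show _ = auxGn n x
  rw [auxGn, ← hsum, Finset.sum_sub_distrib]
  ring

lemma hasDerivAt_log_add {c t : ℝ} (h : 0 < t + c) :
    HasDerivAt (fun s : ℝ => Real.log (s + c)) (1 / (t + c)) t := by
  have h1 : HasDerivAt (fun s : ℝ => s + c) 1 t := (hasDerivAt_id t).add_const c
  have := (Real.hasDerivAt_log h.ne').comp t h1
  simpa [one_div, Function.comp_def] using this

lemma hasDerivAt_auxGn (n : ℕ) {t : ℝ} (ht : 0 < t) :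
    HasDerivAt (auxGn n)
      (-(1/t) + 2 * ∑ i ∈ Finset.range (n + 1), (1/(t + 2*i) - 1/(t + 1 + 2*i))) t := by
  have hsum : HasDerivAt
      (fun s => ∑ i ∈ Finset.range (n+1), (Real.log (s + 2*i) - Real.log (s + 1 + 2*i)))
      (∑ i ∈ Finset.range (n+1), (1/(t + 2*i) - 1/(t + 1 + 2*i))) t := by
    apply HasDerivAt.fun_sum
    intro i _
    have hi : (0:ℝ) ≤ (i:ℝ) := i.cast_nonneg
    have h1 : HasDerivAt (fun s : ℝ => Real.log (s + 2*i)) (1/(t + 2*i)) t :=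
      hasDerivAt_log_add (by linarith)
    have h2 : HasDerivAt (fun s : ℝ => Real.log (s + (1 + 2*i))) (1/(t + (1 + 2*i))) t :=
      hasDerivAt_log_add (by linarith)
    have h2' : HasDerivAt (fun s : ℝ => Real.log (s + 1 + 2*i)) (1/(t + 1 + 2*i)) t := by
      simpa [add_assoc] using h2
    exact h1.sub h2'
  have hlog : HasDerivAt (fun s : ℝ => Real.log (n:ℝ) - Real.log s) (0 - 1/t) t := by
    have := (hasDerivAt_const t (Real.log (n:ℝ))).sub (Real.hasDerivAt_log ht.ne')
    simpa [one_div, Pi.sub_def] using this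
  have := hlog.add (hsum.const_mul 2)
  have heq : 0 - 1/t + 2 * ∑ i ∈ Finset.range (n+1), (1/(t + 2*i) - 1/(t + 1 + 2*i))
      = -(1/t) + 2 * ∑ i ∈ Finset.range (n+1), (1/(t + 2*i) - 1/(t + 1 + 2*i)) := by ring
  rw [heq] at this
  exact this

lemma auxGn_deriv_lower {t : ℝ} (ht : 0 < t) :
    ∀ n : ℕ, 1 ≤ n →
      2 / (t * (t+1) * (t+2)) + 1/(t + 2*n) - 2/(t + 1 + 2*n) ≤
        -(1/t) + 2 * ∑ i ∈ Finset.range (n + 1), (1/(t + 2*i) - 1/(t + 1 + 2*i)) := by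
  intro n hn
  induction n, hn using Nat.le_induction with
  | base =>
    simp only [Finset.sum_range_succ, Finset.sum_range_one]
    push_cast
    have key : 2 / (t * (t+1) * (t+2)) = 1/t - 2/(t+1) + 1/(t+2) := by
      have h0 : t ≠ 0 := ht.ne'
      have h1 : t + 1 ≠ 0 := by linarith
      have h2 : t + 2 ≠ 0 := by linarith
      field_simp
      ring
    rw [key]
    have e1 : t + 2*(0:ℝ) = t := by ring
    have e2 : t + 1 + 2*(0:ℝ) = t + 1 := by ring
    have e3 : t + 2*(1:ℝ) = t + 2 := by ring
    have e4 : t + 1 + 2*(1:ℝ) = t + 3 := by ring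
    rw [e1, e2, e3, e4]
    ring_nf
    linarith [le_refl (0:ℝ)]
  | succ n hn ih =>
    rw [Finset.sum_range_succ]
    push_cast
    set a := t + 2*(n:ℝ) with ha
    have hapos : 0 < a := by
      have : (0:ℝ) ≤ (n:ℝ) := n.cast_nonneg
      simp only [ha]; linarith
    have e1 : t + 2*((n:ℝ)+1) = a + 2 := by rw [ha]; ring
    have e2 : t + 1 + 2*((n:ℝ)+1) = a + 3 := by rw [ha]; ring
    have e3 : t + 1 + 2*(n:ℝ) = a + 1 := by rw [ha]; ring
    rw [e1, e2]
    have ih' : 2 / (t * (t+1) * (t+2)) + 1/a - 2/(a+1) ≤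
        -(1/t) + 2 * ∑ i ∈ Finset.range (n + 1), (1/(t + 2*i) - 1/(t + 1 + 2*i)) := by
      have := ih
      rw [e3] at this
      exact this
    have key2 : 1/a - 2/(a+1) + 1/(a+2) = 2/(a*(a+1)*(a+2)) := by
      have h0 : a ≠ 0 := hapos.ne'
      have h1 : a + 1 ≠ 0 := by linarith
      have h2 : a + 2 ≠ 0 := by linarith
      field_simp
      ring
    have hpos2 : 0 < 2/(a*(a+1)*(a+2)) := by
      have : 0 < a*(a+1)*(a+2) := by
        apply mul_pos (mul_pos hapos (by linarith)); linarith
      positivity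
    -- goal : base + 1/(a+2) - 2/(a+3) ≤ -(1/t) + 2*(S + (1/(a+2) - 1/(a+3)))
    have expand : -(1/t) + 2 * (∑ i ∈ Finset.range (n + 1), (1/(t + 2*i) - 1/(t + 1 + 2*i))
          + (1/(a+2) - 1/(a+3)))
        = (-(1/t) + 2 * ∑ i ∈ Finset.range (n + 1), (1/(t + 2*i) - 1/(t + 1 + 2*i)))
          + 2/(a+2) - 2/(a+3) := by ring
    rw [expand]
    have d1 : 2/(a+2) = 2*(1/(a+2)) := by ring
    have d2 : 2/(a+1) = 2*(1/(a+1)) := by ring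
    linarith [key2, hpos2, ih']

lemma uFun_strictMono : StrictMonoOn uFun (Set.Ioi (0 : ℝ)) := by
  intro x hx y hy hxy
  rw [Set.mem_Ioi] at hx hy
  set c : ℝ := 1 / (y * (y+1) * (y+2)) with hc
  have hyprod : 0 < y * (y+1) * (y+2) := by
    apply mul_pos (mul_pos hy (by linarith)); linarith
  have hcpos : 0 < c := by rw [hc]; positivity
  obtain ⟨N, hN⟩ := exists_nat_ge (y * (y+1) * (y+2) / 2)
  have hev : ∀ᶠ n in atTop, auxGn n x + c * (y - x) ≤ auxGn n y := by
    filter_upwards [eventually_ge_atTop (max N 1)] with n hn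
    have hn1 : 1 ≤ n := le_trans (le_max_right N 1) hn
    have hnN : N ≤ n := le_trans (le_max_left N 1) hn
    have hn' : (1:ℝ) ≤ (n:ℝ) := by exact_mod_cast hn1
    have hNn : (N:ℝ) ≤ (n:ℝ) := by exact_mod_cast hnN
    -- derivative lower bound on [x,y]
    have hderiv : ∀ t ∈ Set.Icc x y, c ≤
        -(1/t) + 2 * ∑ i ∈ Finset.range (n + 1), (1/(t + 2*i) - 1/(t + 1 + 2*i)) := by
      intro t htm
      have ht : 0 < t := lt_of_lt_of_le hx htm.1
      have hty : t ≤ y := htm.2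
      have h1 := auxGn_deriv_lower ht n hn1
      have htprod : 0 < t * (t+1) * (t+2) := by
        apply mul_pos (mul_pos ht (by linarith)); linarith
      have hA : 2 / (y * (y+1) * (y+2)) ≤ 2 / (t * (t+1) * (t+2)) := by
        apply div_le_div_of_nonneg_left (by norm_num) htprod
        have h1' : t + 1 ≤ y + 1 := by linarith
        have h2' : t + 2 ≤ y + 2 := by linarith
        have := mul_le_mul (mul_le_mul hty h1' (by linarith) hy.le) h2'
          (by linarith) (by positivity)
        linarith [this]
      have hB : -(1/(2*(n:ℝ))) ≤ 1/(t + 2*n) - 2/(t + 1 + 2*n) := by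
        have hnpos : (0:ℝ) < 2*(n:ℝ) := by linarith
        have hd1 : 0 < t + 2*(n:ℝ) := by linarith
        have hd2 : 0 < t + 1 + 2*(n:ℝ) := by linarith
        have heq : 1/(t + 2*n) - 2/(t + 1 + 2*n) + 1/(2*(n:ℝ))
            = ((t + 2*n)*(t+1) + 2*n) / ((t + 2*n)*(t + 1 + 2*n)*(2*n)) := by
          field_simp
          ring
        have hge : 0 ≤ ((t + 2*(n:ℝ))*(t+1) + 2*n) / ((t + 2*n)*(t + 1 + 2*n)*(2*n)) := by
          apply div_nonneg
          · nlinarith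
          · positivity
        linarith [heq ▸ hge]
      have hC : 1/(2*(n:ℝ)) ≤ c := by
        rw [hc]
        apply one_div_le_one_div_of_le hyprod
        linarith
      have h2c : 2 / (y * (y+1) * (y+2)) = 2 * c := by rw [hc]; ring
      linarith
    -- MVT via monotonicity of auxGn n t - c*t
    have hmono : MonotoneOn (fun t => auxGn n t - c * t) (Set.Icc x y) := by
      apply monotoneOn_of_deriv_nonneg (convex_Icc x y)
      · intro t htm
        have ht : 0 < t := lt_of_lt_of_le hx htm.1
        exact ((hasDerivAt_auxGn n ht).sub (by simpa using (hasDerivAt_id t).const_mul c : HasDerivAt (fun s : ℝ => c * s) c t)).continuousAt.continuousWithinAt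
      · intro t htm
        rw [interior_Icc] at htm
        have ht : 0 < t := lt_trans hx htm.1
        exact ((hasDerivAt_auxGn n ht).sub (by simpa using (hasDerivAt_id t).const_mul c : HasDerivAt (fun s : ℝ => c * s) c t)).differentiableAt.differentiableWithinAt
      · intro t htm
        rw [interior_Icc] at htm
        have ht : 0 < t := lt_trans hx htm.1
        have hct : HasDerivAt (fun s : ℝ => c * s) c t := by
          simpa using (hasDerivAt_id t).const_mul c
        have hD := (hasDerivAt_auxGn n ht).sub hct
        rw [show (fun t => auxGn n t - c * t) = (auxGn n - fun s => c * s) from rfl, hD.deriv]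
        have := hderiv t ⟨htm.1.le, htm.2.le⟩
        linarith
    have := hmono ⟨le_refl x, hxy.le⟩ ⟨hxy.le, le_refl y⟩ hxy.le
    simp only at this
    linarith
  have h1 : Tendsto (fun n => auxGn n x + c * (y - x)) atTop (𝓝 (uFun x + c * (y - x))) :=
    (auxGn_tendsto hx).add_const _
  have h2 := auxGn_tendsto hy
  have hle : uFun x + c * (y - x) ≤ uFun y := le_of_tendsto_of_tendsto h1 h2 hev
  have : 0 < c * (y - x) := mul_pos hcpos (by linarith)
  linarith

lemma uFun_funEq {x : ℝ} (hx : 0 < x) :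
    uFun x + uFun (x + 1) = Real.log (x / (4 * (x + 1))) := by
  have hx1 : (0:ℝ) < x + 1 := by linarith
  have hg1 : 0 < Real.Gamma ((x+1)/2) := Real.Gamma_pos_of_pos (by linarith)
  have hg2 : 0 < Real.Gamma (x/2) := Real.Gamma_pos_of_pos (by linarith)
  have hsx : 0 < Real.sqrt x := Real.sqrt_pos.mpr hx
  have hsx1 : 0 < Real.sqrt (x+1) := Real.sqrt_pos.mpr hx1
  have hG : Real.Gamma ((x + 1 + 1)/2) = (x/2) * Real.Gamma (x/2) := by
    have h : (x + 1 + 1)/2 = x/2 + 1 := by ring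
    rw [h, Real.Gamma_add_one (by linarith : x/2 ≠ 0)]
  set a := Real.Gamma ((x+1)/2) / (Real.sqrt x * Real.Gamma (x/2)) with hadef
  set b := Real.Gamma ((x+1+1)/2) / (Real.sqrt (x+1) * Real.Gamma ((x+1)/2)) with hbdef
  have ha : 0 < a := by rw [hadef]; positivity
  have hb : 0 < b := by
    rw [hbdef, hG]
    have : 0 < x/2 := by linarith
    positivity
  have hab : (a * b)^2 = x / (4 * (x + 1)) := by
    have hsq : Real.sqrt x ^ 2 = x := Real.sq_sqrt hx.le
    have hsq1 : Real.sqrt (x+1) ^ 2 = x + 1 := Real.sq_sqrt hx1.le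
    rw [hadef, hbdef, hG]
    field_simp
    rw [hsq, hsq1]; ring
  have : uFun x + uFun (x+1) = 2 * Real.log a + 2 * Real.log b := by
    rw [uFun, uFun]
  rw [this, ← hab, Real.log_pow, Real.log_mul ha.ne' hb.ne']
  push_cast
  ring

lemma uFun_tendsto : Tendsto uFun atTop (𝓝 (-Real.log 2)) := by
  have hub : ∀ s : ℝ, 0 < s → uFun s ≤ -Real.log 2 := by
    intro s hs
    have h1 : uFun s ≤ uFun (s + 1) :=
      (uFun_strictMono (Set.mem_Ioi.mpr hs) (Set.mem_Ioi.mpr (by linarith)) (lt_add_one s)).le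
    have h2 := uFun_funEq hs
    have h3 : Real.log (s / (4 * (s + 1))) ≤ Real.log (1/4 : ℝ) := by
      apply Real.log_le_log (by positivity)
      rw [div_le_div_iff₀ (by positivity) (by norm_num)]
      linarith
    have h4 : Real.log (1/4 : ℝ) = -(2 * Real.log 2) := by
      rw [one_div, Real.log_inv]
      have : (4:ℝ) = 2^2 := by norm_num
      rw [this, Real.log_pow]
      push_cast; ring
    linarith
  set v : ℝ → ℝ := fun t => uFun (max t 1) with hv
  have hvmono : Monotone v := by
    intro t₁ t₂ h
    rcases eq_or_lt_of_le (max_le_max h (le_refl (1:ℝ))) with heq | hlt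
    · rw [hv]; simp only; rw [heq]
    · exact (uFun_strictMono (Set.mem_Ioi.mpr (lt_of_lt_of_le zero_lt_one (le_max_right t₁ 1)))
        (Set.mem_Ioi.mpr (lt_of_lt_of_le zero_lt_one (le_max_right t₂ 1))) hlt).le
  have hvbdd : BddAbove (Set.range v) := by
    refine ⟨-Real.log 2, ?_⟩
    rintro _ ⟨t, rfl⟩
    exact hub _ (lt_of_lt_of_le zero_lt_one (le_max_right t 1))
  have hvt := tendsto_atTop_ciSup hvmono hvbdd
  set L := ⨆ t, v t with hL
  have huL : Tendsto uFun atTop (𝓝 L) := by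
    refine Tendsto.congr' ?_ hvt
    filter_upwards [eventually_ge_atTop (1:ℝ)] with t ht
    rw [hv]; simp only [max_eq_left ht]
  -- identify L
  have hsum : Tendsto (fun x => uFun x + uFun (x + 1)) atTop (𝓝 (L + L)) := by
    exact huL.add (huL.comp (tendsto_atTop_add_const_right _ 1 tendsto_id))
  have hratio : Tendsto (fun x : ℝ => x / (4 * (x + 1))) atTop (𝓝 (1/4 : ℝ)) := by
    have h4 : Tendsto (fun x : ℝ => 4 + 4 / x) atTop (𝓝 (4:ℝ)) := by
      have := Tendsto.div_atTop (tendsto_const_nhds (x := (4:ℝ))) tendsto_id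
      simpa using tendsto_const_nhds.add this
    have hinv : Tendsto (fun x : ℝ => (4 + 4 / x)⁻¹) atTop (𝓝 ((4:ℝ)⁻¹)) :=
      h4.inv₀ (by norm_num)
    refine Tendsto.congr' ?_ (by simpa [one_div] using hinv)
    filter_upwards [eventually_gt_atTop (0:ℝ)] with x hx
    have hx0 : x ≠ 0 := ne_of_gt hx
    have h1 : (4:ℝ) + 4/x = (4*(x+1))/x := by
      field_simp
      try ring
    rw [h1, inv_div]
  have hlogr : Tendsto (fun x : ℝ => Real.log (x / (4 * (x + 1)))) atTop
      (𝓝 (Real.log (1/4 : ℝ))) :=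
    (Real.continuousAt_log (by norm_num)).tendsto.comp hratio
  have hsum2 : Tendsto (fun x => uFun x + uFun (x + 1)) atTop (𝓝 (Real.log (1/4 : ℝ))) := by
    refine Tendsto.congr' ?_ hlogr
    filter_upwards [eventually_gt_atTop (0:ℝ)] with x hx
    exact (uFun_funEq hx).symm
  have hLL : L + L = Real.log (1/4 : ℝ) := tendsto_nhds_unique hsum hsum2
  have h4 : Real.log (1/4 : ℝ) = -(2 * Real.log 2) := by
    rw [one_div, Real.log_inv]
    have : (4:ℝ) = 2^2 := by norm_num
    rw [this, Real.log_pow]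
    push_cast; ring
  have : L = -Real.log 2 := by rw [h4] at hLL; linarith
  rwa [this] at huL

/-- `u` is strictly increasing on `(0,∞)`, satisfies
`u(x) + u(x+1) = ln(x/(4(x+1)))` for `x > 0`, and `u(x) → −ln 2` as `x → ∞`. -/
theorem stmt11 :
    StrictMonoOn uFun (Set.Ioi (0 : ℝ)) ∧
    (∀ x : ℝ, 0 < x → uFun x + uFun (x + 1) = Real.log (x / (4 * (x + 1)))) ∧
    Filter.Tendsto uFun Filter.atTop (nhds (-Real.log 2)) :=
  ⟨uFun_strictMono, fun _ hx => uFun_funEq hx, uFun_tendsto⟩
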